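/- arXiv:1806.03614 — 2 statements merged into one kernel-verified Lean document; each statement's English description precedes it below -/
import Mathlib

section
/- Let G be a finite abelian group of order n, D(G) its generalized dihedral group (assumed non-abelian), \Gamma the commuting graph of D(G), and z = |{g \in G : g^2 = e}|. For every vertex v \in \Omega_1 = Z(D(G)) = {(g,1) : g^2 = e}, the detour eccentricity of v in \Gamma equals 2n - 1 if n/z < z, and equals n + z(z - 1) - 1 if n/z \ge z. -/
/-- The generalized dihedral group `D(G) = G ⋊ C₂`, with `⟨g, false⟩`
representing `(g, 1)` and `⟨g, true⟩` representing `(g, -1)`.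
Multiplication is `(g₁, c₁)(g₂, c₂) = (g₁ g₂^{c₁}, c₁ c₂)`, i.e. `-1` acts by inversion. -/
@[ext]
structure GenDihedral (G : Type) where
  g : G
  b : Bool
  deriving DecidableEq

namespace GenDihedral

variable {G : Type} [CommGroup G]

instance : Mul (GenDihedral G) :=
  ⟨fun a c => ⟨a.g * (if a.b then c.g⁻¹ else c.g), xor a.b c.b⟩⟩

instance : One (GenDihedral G) := ⟨⟨1, false⟩⟩

instance : Inv (GenDihedral G) := ⟨fun a => ⟨if a.b then a.g else a.g⁻¹, a.b⟩⟩

theorem mul_def (a c : GenDihedral G) :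
    a * c = ⟨a.g * (if a.b then c.g⁻¹ else c.g), xor a.b c.b⟩ := rfl

theorem one_def : (1 : GenDihedral G) = ⟨1, false⟩ := rfl

theorem inv_def (a : GenDihedral G) : a⁻¹ = ⟨if a.b then a.g else a.g⁻¹, a.b⟩ := rfl

instance : Group (GenDihedral G) where
  mul_assoc a c d := by
    obtain ⟨g₁, b₁⟩ := a; obtain ⟨g₂, b₂⟩ := c; obtain ⟨g₃, b₃⟩ := d
    cases b₁ <;> cases b₂ <;> cases b₃ <;>
      simp [mul_def, mul_assoc, mul_comm, mul_left_comm, mul_inv, inv_inv]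
  one_mul a := by obtain ⟨g, b⟩ := a; cases b <;> simp [mul_def, one_def]
  mul_one a := by obtain ⟨g, b⟩ := a; cases b <;> simp [mul_def, one_def]
  inv_mul_cancel a := by
    obtain ⟨g, b⟩ := a; cases b <;> simp [mul_def, one_def, inv_def]

instance [Fintype G] : Fintype (GenDihedral G) :=
  Fintype.ofEquiv (G × Bool)
    ⟨fun p => ⟨p.1, p.2⟩, fun x => (x.g, x.b), fun _ => rfl, fun _ => rfl⟩

instance [DecidableEq G] (a c : GenDihedral G) : Decidable (Commute a c) :=
  decidable_of_iff (a * c = c * a) Iff.rfl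

end GenDihedral

namespace GenDihedral

/-- The commuting graph of `D(G)`: vertices are the elements of `D(G)`, and two
distinct vertices are adjacent iff they commute. -/
def commGraph (G : Type) [CommGroup G] : SimpleGraph (GenDihedral G) where
  Adj u v := u ≠ v ∧ u * v = v * u
  symm := ⟨fun _ _ h => ⟨h.1.symm, h.2.symm⟩⟩
  loopless := ⟨fun _ h => h.1 rfl⟩

instance {G : Type} [CommGroup G] [DecidableEq G] : DecidableRel (commGraph G).Adj :=
  fun _ _ => instDecidableAnd

end GenDihedral

/-- The detour eccentricity of a vertex `v` in a graph `Γ`: the maximum length of a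
simple path in `Γ` starting at `v` (equivalently, the maximum over all vertices `u`
of the detour distance `d_D(v, u)`, the length of a longest simple `v-u` path). -/
noncomputable def detourEcc {V : Type} (Γ : SimpleGraph V) (v : V) : ℕ :=
  sSup {n : ℕ | ∃ u : V, ∃ p : Γ.Walk v u, p.IsPath ∧ p.length = n}

/-!
Remove the `z` central rotations `(g, 1)`, `g² = e`, which are adjacent to every vertex, from the
commuting graph. What is left splits into the clique of the `n - z` noncentral rotations and, for
each of the `m = n / z` squares `s`, the clique of the `z` reflections `(h, -1)` with `h² = s`. A
path starting at a central vertex can only move to a new component through a central vertex, so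
it meets at most as many components as it has central vertices. Hence it has at most
`z + (n - z) + (z - 1) z` vertices (using `m ≥ 2`), and trivially at most `2n = n + m z`.
Conversely, alternating `min(m, z - 1)` whole reflection classes with the other central rotations,
and then running through the remaining rotations, gives a path with `n + min(m, z - 1) z` vertices.
-/

open Finset

theorem Finset.card_le_add_mul_card_image_sub_one {α β : Type*} [DecidableEq β] {f : α → β}
    (s : Finset α) (b₀ : β) {c d : ℕ} (hcd : c ≤ d) (h₀ : #{a ∈ s | f a = b₀} ≤ d)
    (h : ∀ b ≠ b₀, #{a ∈ s | f a = b} ≤ c) : #s ≤ d + (#(s.image f) - 1) * c := by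
  rw [card_eq_sum_card_image f s]
  by_cases hb₀ : b₀ ∈ s.image f
  · rw [← add_sum_erase _ _ hb₀, ← card_erase_of_mem hb₀, ← smul_eq_mul]
    exact add_le_add h₀ (sum_le_card_nsmul _ _ _ fun b hb => h b (ne_of_mem_erase hb))
  · calc ∑ b ∈ s.image f, #{a ∈ s | f a = b} ≤ #(s.image f) * c := by
          rw [← smul_eq_mul]
          exact sum_le_card_nsmul _ _ _ fun b hb => h b (ne_of_mem_of_not_mem hb hb₀)
      _ ≤ d + (#(s.image f) - 1) * c := by
          rcases #(s.image f) with _ | k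
          · simp
          · rw [Nat.add_sub_cancel, Nat.succ_mul, add_comm]
            exact Nat.add_le_add_right hcd _

theorem List.isChain_commute_cons_append_singleton {M : Type*} [Monoid M] {x c : M} {l : List M}
    (hx : ∀ y, Commute x y) (hc : ∀ y, Commute c y) (hl : l.IsChain Commute) :
    (x :: (l ++ [c])).IsChain Commute :=
  (hl.append (.singleton c) fun a _ b hb => by
    rw [List.head?_singleton, Option.mem_some_iff] at hb
    exact hb ▸ (hc a).symm).cons fun y _ => hx y

namespace SimpleGraph

/-- If `f` is constant along the edges of `Γ` that avoid `C`, a path starting in `C` can reach a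
new value of `f` outside `C` only right after a vertex of `C`. -/
theorem Walk.IsPath.card_image_support_sdiff_le {V ι : Type*} [DecidableEq V] [DecidableEq ι]
    {Γ : SimpleGraph V} (C : Finset V) (f : V → ι)
    (hf : ∀ x y, Γ.Adj x y → x ∉ C → y ∉ C → f x = f y) :
    ∀ {u w : V} {p : Γ.Walk u w}, p.IsPath →
      #((p.support.toFinset \ C).image f) ≤ #(p.support.toFinset ∩ C) + if u ∈ C then 0 else 1
  | u, _, .nil, _ => by
    by_cases hu : u ∈ C <;> simp only [Walk.support_nil, List.toFinset_cons, List.toFinset_nil,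
      insert_empty, singleton_inter_of_mem, singleton_inter_of_notMem, hu, if_pos, if_neg,
      not_false_eq_true, card_singleton, card_empty] <;>
    exact card_image_le.trans ((card_le_card sdiff_subset).trans (card_singleton u).le)
  | u, _, .cons (v := v) huv p, hp => by
    rw [Walk.cons_isPath_iff] at hp
    have ih := hp.1.card_image_support_sdiff_le C f hf
    have hu : u ∉ p.support.toFinset := by simpa using hp.2
    have hv : v ∈ p.support.toFinset := by simp
    simp only [Walk.support_cons, List.toFinset_cons]
    by_cases huC : u ∈ C
    · rw [insert_sdiff_of_mem _ huC, insert_inter_of_mem huC, card_insert_of_notMem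
        (fun h => hu (mem_inter.1 h).1), if_pos huC]
      split_ifs at ih <;> omega
    · rw [insert_sdiff_of_notMem _ huC, insert_inter_of_notMem huC, image_insert, if_neg huC]
      by_cases hvC : v ∈ C
      · rw [if_pos hvC] at ih
        exact (card_insert_le _ _).trans (by omega)
      · rw [if_neg hvC] at ih
        rwa [insert_eq_of_mem
          (hf u v huv huC hvC ▸ mem_image_of_mem f (mem_sdiff.2 ⟨hv, hvC⟩))]

theorem exists_isPath_of_isChain {V : Type*} {Γ : SimpleGraph V} {v : V} {l : List V}
    (hc : (v :: l).IsChain Γ.Adj) (hnd : (v :: l).Nodup) :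
    ∃ u, ∃ p : Γ.Walk v u, p.IsPath ∧ p.length = l.length := by
  let p : Γ.Walk v _ := .ofSupport (v :: l) (List.cons_ne_nil _ _) hc
  have hp : p.support = v :: l := Walk.support_ofSupport _ _
  refine ⟨_, p, (Walk.isPath_def _).2 (by rwa [hp]), ?_⟩
  simpa [hp] using p.length_support.symm

end SimpleGraph

theorem detourEcc_eq_of_forall_le {V : Type} {Γ : SimpleGraph V} {v : V} {k : ℕ}
    (hle : ∀ u (p : Γ.Walk v u), p.IsPath → p.length ≤ k)
    (hex : ∃ u, ∃ p : Γ.Walk v u, p.IsPath ∧ p.length = k) : detourEcc Γ v = k :=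
  IsGreatest.csSup_eq ⟨hex, fun _ ⟨u, p, hp, hn⟩ => hn ▸ hle u p hp⟩

section SquareFibers

variable {G : Type} [CommGroup G] [Fintype G] [DecidableEq G]

theorem card_filter_sq_eq_of_mem_range {s : G} (hs : s ∈ Set.range fun g : G => g ^ 2) :
    #{h : G | h ^ 2 = s} = #{h : G | h ^ 2 = 1} :=
  MonoidHom.card_fiber_eq_of_mem_range (powMonoidHom 2 : G →* G) hs ⟨1, one_pow 2⟩

theorem card_filter_sq_eq_le (s : G) : #{h : G | h ^ 2 = s} ≤ #{h : G | h ^ 2 = 1} := by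
  by_cases hs : s ∈ Set.range fun g : G => g ^ 2
  · exact (card_filter_sq_eq_of_mem_range hs).le
  · rw [card_eq_zero.2 (filter_eq_empty_iff.2 fun h _ hh => hs ⟨h, hh⟩)]
    exact Nat.zero_le _

theorem card_eq_card_image_sq_mul :
    Fintype.card G = #(univ.image fun g : G => g ^ 2) * #{h : G | h ^ 2 = 1} := by
  rw [← card_univ, card_eq_sum_card_image (· ^ 2), ← smul_eq_mul, ← sum_const]
  refine sum_congr rfl fun s hs => ?_
  obtain ⟨g, -, rfl⟩ := mem_image.1 hs
  simpa using card_filter_sq_eq_of_mem_range ⟨g, rfl⟩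

theorem one_lt_card_image_sq {g : G} (hg : g ^ 2 ≠ 1) :
    1 < #(univ.image fun g : G => g ^ 2) :=
  one_lt_card.2 ⟨g ^ 2, mem_image_of_mem _ (mem_univ g), 1 ^ 2, mem_image_of_mem _ (mem_univ 1),
    by simpa using hg⟩

end SquareFibers

namespace GenDihedral

theorem card (G : Type) [CommGroup G] [Fintype G] :
    Fintype.card (GenDihedral G) = 2 * Fintype.card G := by
  rw [Fintype.ofEquiv_card, Fintype.card_prod, Fintype.card_bool, mul_comm]

theorem injOn_g_of_b_eq {G : Type} {s : Set (GenDihedral G)}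
    (hs : ∀ x ∈ s, ∀ y ∈ s, x.b = y.b) : Set.InjOn GenDihedral.g s :=
  fun x hx y hy h => GenDihedral.ext h (hs x hx y hy)

section Commute

variable {G : Type} [CommGroup G]

theorem commute_mk_false_mk_false (a b : G) :
    Commute (⟨a, false⟩ : GenDihedral G) ⟨b, false⟩ := by
  simp [Commute, SemiconjBy, mul_def, mul_comm]

theorem commute_mk_false_mk_true_iff (a b : G) :
    Commute (⟨a, false⟩ : GenDihedral G) ⟨b, true⟩ ↔ a ^ 2 = 1 := by
  simp [Commute, SemiconjBy, mul_def, GenDihedral.ext_iff, mul_comm b, pow_two,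
    eq_inv_iff_mul_eq_one]

theorem commute_mk_true_mk_true_iff (a b : G) :
    Commute (⟨a, true⟩ : GenDihedral G) ⟨b, true⟩ ↔ a ^ 2 = b ^ 2 := by
  simp only [Commute, SemiconjBy, mul_def, GenDihedral.ext_iff, ite_true, Bool.xor_true,
    Bool.not_true, and_true]
  rw [pow_two, pow_two, mul_inv_eq_iff_eq_mul, mul_comm b a⁻¹, mul_assoc, eq_inv_mul_iff_mul_eq]

theorem commute_mk_false_of_sq_eq_one {a : G} (ha : a ^ 2 = 1) (x : GenDihedral G) :
    Commute ⟨a, false⟩ x := by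
  obtain ⟨b, _ | _⟩ := x
  · exact commute_mk_false_mk_false a b
  · exact (commute_mk_false_mk_true_iff a b).2 ha

theorem isChain_commute_map_mk_false (l : List G) :
    (l.map (⟨·, false⟩ : G → GenDihedral G)).IsChain Commute :=
  (List.pairwise_of_forall_mem_list fun _ hx _ hy => by
    obtain ⟨a, -, rfl⟩ := List.mem_map.1 hx
    obtain ⟨b, -, rfl⟩ := List.mem_map.1 hy
    exact commute_mk_false_mk_false a b).isChain

theorem isChain_adj_of_nodup {l : List (GenDihedral G)} (hl : l.Nodup)
    (hc : l.IsChain Commute) : l.IsChain (commGraph G).Adj := by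
  induction hc with
  | nil => exact .nil
  | singleton => exact .singleton _
  | cons_cons hab _ ih =>
    exact .cons_cons ⟨fun h => (List.nodup_cons.1 hl).1 (h ▸ List.mem_cons_self), hab⟩
      (ih hl.of_cons)

end Commute

section UpperBound

variable {G : Type} [CommGroup G]

/-- Labels the components of the commuting graph with the central rotations removed. -/
def componentLabel (x : GenDihedral G) : Option G :=
  if x.b then some (x.g ^ 2) else none

theorem componentLabel_eq_none {x : GenDihedral G} : componentLabel x = none ↔ x.b = false := by
  cases h : x.b <;> simp [componentLabel, h]

theorem componentLabel_eq_some {x : GenDihedral G} {s : G} :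
    componentLabel x = some s ↔ x.b = true ∧ x.g ^ 2 = s := by
  cases h : x.b <;> simp [componentLabel, h]

variable [Fintype G] [DecidableEq G]

variable (G) in
def centralRotations : Finset (GenDihedral G) :=
  {x | x.b = false ∧ x.g ^ 2 = 1}

@[simp]
theorem mem_centralRotations {x : GenDihedral G} :
    x ∈ centralRotations G ↔ x.b = false ∧ x.g ^ 2 = 1 := by
  simp [centralRotations]

theorem componentLabel_eq_of_adj {x y : GenDihedral G} (h : (commGraph G).Adj x y)
    (hx : x ∉ centralRotations G) (hy : y ∉ centralRotations G) :
    componentLabel x = componentLabel y := by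
  obtain ⟨a, _ | _⟩ := x <;> obtain ⟨b, _ | _⟩ := y
  · rfl
  · exact absurd (mem_centralRotations.2 ⟨rfl, (commute_mk_false_mk_true_iff a b).1 h.2⟩) hx
  · exact absurd
      (mem_centralRotations.2 ⟨rfl, (commute_mk_false_mk_true_iff b a).1 h.2.symm⟩) hy
  · simpa [componentLabel] using (commute_mk_true_mk_true_iff a b).1 h.2

theorem card_inter_centralRotations_le (S : Finset (GenDihedral G)) :
    #(S ∩ centralRotations G) ≤ #{h : G | h ^ 2 = 1} := by
  refine card_le_card_of_injOn GenDihedral.g (fun x hx => ?_) (injOn_g_of_b_eq ?_)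
  · simp_all
  · simp_all

theorem card_filter_componentLabel_eq_none_le (S : Finset (GenDihedral G)) :
    #{x ∈ S \ centralRotations G | componentLabel x = none} ≤
      Fintype.card G - #{h : G | h ^ 2 = 1} := by
  have hsplit := card_filter_add_card_filter_not (s := (univ : Finset G)) (· ^ 2 = 1)
  rw [card_univ] at hsplit
  calc #{x ∈ S \ centralRotations G | componentLabel x = none}
      ≤ #{h : G | ¬h ^ 2 = 1} := by
        refine card_le_card_of_injOn GenDihedral.g (fun x hx => ?_) (injOn_g_of_b_eq ?_)
        · simp_all [componentLabel_eq_none]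
        · simp_all [componentLabel_eq_none]
    _ = _ := by omega

theorem card_filter_componentLabel_eq_some_le (S : Finset (GenDihedral G)) (s : G) :
    #{x ∈ S \ centralRotations G | componentLabel x = some s} ≤ #{h : G | h ^ 2 = 1} := by
  refine le_trans ?_ (card_filter_sq_eq_le s)
  refine card_le_card_of_injOn GenDihedral.g (fun x hx => ?_) (injOn_g_of_b_eq ?_)
  · simp_all [componentLabel_eq_some]
  · simp_all [componentLabel_eq_some]

theorem length_add_one_le_card_add_of_isPath {v u : GenDihedral G} {p : (commGraph G).Walk v u}
    (hp : p.IsPath) (hv : v ∈ centralRotations G)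
    (hn : 2 * #{h : G | h ^ 2 = 1} ≤ Fintype.card G) :
    p.length + 1 ≤ Fintype.card G + (#{h : G | h ^ 2 = 1} - 1) * #{h : G | h ^ 2 = 1} := by
  set z := #{h : G | h ^ 2 = 1}
  set S := p.support.toFinset
  have hS : #S = p.length + 1 := by
    rw [List.toFinset_card_of_nodup hp.support_nodup, SimpleGraph.Walk.length_support]
  have hcomponents : #((S \ centralRotations G).image componentLabel) ≤
      #(S ∩ centralRotations G) := by
    simpa [hv] using hp.card_image_support_sdiff_le (centralRotations G) componentLabel
      fun _ _ => componentLabel_eq_of_adj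
  have hcentral := card_inter_centralRotations_le S
  have hrest := card_le_add_mul_card_image_sub_one (f := componentLabel) (c := z)
    (d := Fintype.card G - z) (S \ centralRotations G) none (by omega)
    (card_filter_componentLabel_eq_none_le S) fun b hb => by
      obtain ⟨s, rfl⟩ := Option.ne_none_iff_exists'.1 hb
      exact card_filter_componentLabel_eq_some_le S s
  have hmul : (#((S \ centralRotations G).image componentLabel) - 1) * z ≤ (z - 1) * z :=
    Nat.mul_le_mul_right _ (by omega)
  have := card_inter_add_card_sdiff S (centralRotations G)
  omega

theorem length_add_one_le_of_isPath {g : G} (hg : g ^ 2 ≠ 1) {v u : GenDihedral G}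
    {p : (commGraph G).Walk v u} (hp : p.IsPath) (hv : v ∈ centralRotations G) :
    p.length + 1 ≤ Fintype.card G +
      min #(univ.image fun g : G => g ^ 2) (#{h : G | h ^ 2 = 1} - 1) * #{h : G | h ^ 2 = 1} := by
  have hcard := card_eq_card_image_sq_mul (G := G)
  have hlarge := length_add_one_le_card_add_of_isPath hp hv <| hcard ▸
    Nat.mul_le_mul_right _ (one_lt_card_image_sq hg)
  have hsmall := hp.length_lt
  rw [GenDihedral.card] at hsmall
  rcases min_choice #(univ.image fun g : G => g ^ 2) (#{h : G | h ^ 2 = 1} - 1) with h | h <;>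
    rw [h]
  · omega
  · exact hlarge

end UpperBound

section LowerBound

variable {G : Type} [CommGroup G] [Fintype G] [DecidableEq G]

noncomputable def reflFiber (s : G) : List (GenDihedral G) :=
  ({h : G | h ^ 2 = s} : Finset G).toList.map (⟨·, true⟩)

theorem mem_reflFiber {s : G} {x : GenDihedral G} :
    x ∈ reflFiber s ↔ x.b = true ∧ x.g ^ 2 = s := by
  obtain ⟨a, b⟩ := x
  cases b <;> simp [reflFiber]

theorem nodup_reflFiber (s : G) : (reflFiber s).Nodup :=
  (nodup_toList _).map fun _ _ h => congrArg GenDihedral.g h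

theorem length_reflFiber {s : G} (hs : s ∈ Set.range fun g : G => g ^ 2) :
    (reflFiber s).length = #{h : G | h ^ 2 = 1} := by
  rw [reflFiber, List.length_map, length_toList, card_filter_sq_eq_of_mem_range hs]

theorem isChain_commute_reflFiber (s : G) : (reflFiber s).IsChain Commute := by
  refine (List.pairwise_of_forall_mem_list fun x hx y hy => ?_).isChain
  obtain ⟨hxb, hxs⟩ := mem_reflFiber.1 hx
  obtain ⟨hyb, hys⟩ := mem_reflFiber.1 hy
  obtain ⟨a, _⟩ := x; obtain ⟨b, _⟩ := y
  subst hxb hyb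
  exact (commute_mk_true_mk_true_iff a b).2 (hxs.trans hys.symm)

noncomputable def weave : List G → List G → List (GenDihedral G)
  | s :: sq, r :: rot => reflFiber s ++ ⟨r, false⟩ :: weave sq rot
  | _, rot => rot.map (⟨·, false⟩)

theorem isChain_commute_cons_weave {g : G} (hg : g ^ 2 = 1) :
    ∀ {sq rot : List G}, (∀ r ∈ rot.take sq.length, r ^ 2 = 1) →
      ((⟨g, false⟩ : GenDihedral G) :: weave sq rot).IsChain Commute
  | s :: sq, r :: rot, hrot => by
    have hr : r ^ 2 = 1 := hrot r (by simp)
    rw [weave, List.isChain_cons_split]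
    exact ⟨List.isChain_commute_cons_append_singleton (commute_mk_false_of_sq_eq_one hg)
        (commute_mk_false_of_sq_eq_one hr) (isChain_commute_reflFiber s),
      isChain_commute_cons_weave hr fun r' hr' => hrot r' (by simp [hr'])⟩
  | [], rot, _ | _ :: _, [], _ => by
    simp only [weave]
    exact (isChain_commute_map_mk_false _).cons fun y _ => commute_mk_false_of_sq_eq_one hg y

theorem weave_perm :
    ∀ {sq rot : List G}, sq.length ≤ rot.length →
      (weave sq rot).Perm (sq.flatMap reflFiber ++ rot.map (⟨·, false⟩))
  | s :: sq, r :: rot, h => by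
    rw [weave, List.flatMap_cons, List.map_cons, List.append_assoc]
    exact ((weave_perm (by simpa using h)).cons _).trans List.perm_middle.symm |>.append_left _
  | [], rot, _ => by simp [weave]
  | _ :: _, [], h => by simp at h

theorem nodup_cons_weave {g : G} {sq rot : List G} (hsq : sq.Nodup) (hrot : (g :: rot).Nodup)
    (hlen : sq.length ≤ rot.length) :
    ((⟨g, false⟩ : GenDihedral G) :: weave sq rot).Nodup := by
  rw [(((weave_perm hlen).cons _).trans List.perm_middle.symm).nodup_iff]
  change (sq.flatMap reflFiber ++ (g :: rot).map fun x => (⟨x, false⟩ : GenDihedral G)).Nodup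
  rw [List.nodup_append]
  refine ⟨List.nodup_flatMap.2 ⟨fun s _ => nodup_reflFiber s, hsq.imp fun hne x hx hx' => ?_⟩,
    hrot.map fun _ _ h => congrArg GenDihedral.g h, fun x hx y hy hxy => ?_⟩
  · exact hne ((mem_reflFiber.1 hx).2.symm.trans (mem_reflFiber.1 hx').2)
  · obtain ⟨s, -, hxs⟩ := List.mem_flatMap.1 hx
    obtain ⟨r, -, rfl⟩ := List.mem_map.1 hy
    simpa [hxy] using (mem_reflFiber.1 hxs).1

theorem length_cons_weave {g : G} {sq rot : List G} (hlen : sq.length ≤ rot.length)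
    (hsq : ∀ s ∈ sq, s ∈ Set.range fun g : G => g ^ 2) :
    ((⟨g, false⟩ : GenDihedral G) :: weave sq rot).length =
      rot.length + 1 + sq.length * #{h : G | h ^ 2 = 1} := by
  rw [((weave_perm hlen).cons _).length_eq, List.length_cons, List.length_append,
    List.length_map, List.length_flatMap,
    List.map_congr_left fun s hs => length_reflFiber (hsq s hs)]
  simp only [List.map_const', List.sum_replicate, smul_eq_mul]
  ring

theorem exists_enumeration_sq_eq_one_first {g : G} (hg : g ^ 2 = 1) :
    ∃ rot : List G, (g :: rot).Nodup ∧ rot.length + 1 = Fintype.card G ∧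
      ∀ r ∈ rot.take (#{h : G | h ^ 2 = 1} - 1), r ^ 2 = 1 := by
  have hg' : g ∈ ({h : G | h ^ 2 = 1} : Finset G) := by simpa using hg
  refine ⟨(({h : G | h ^ 2 = 1} : Finset G).erase g).toList ++
    ({h : G | ¬h ^ 2 = 1} : Finset G).toList, ?_, ?_, fun r hr => ?_⟩
  · rw [List.nodup_cons, List.nodup_append]
    refine ⟨by simp [hg], nodup_toList _, nodup_toList _, fun a ha b hb hab => ?_⟩
    simp_all
  · have := card_filter_add_card_filter_not (s := (univ : Finset G)) (· ^ 2 = 1)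
    rw [card_univ] at this
    have := card_pos.2 ⟨g, hg'⟩
    simp only [List.length_append, length_toList, card_erase_of_mem hg']
    omega
  · rw [List.take_append_of_le_length (by simp [card_erase_of_mem hg'])] at hr
    simpa using (mem_erase.1 (mem_toList.1 (List.mem_of_mem_take hr))).2

theorem exists_isPath_length_add_one_eq {g : G} (hg : g ^ 2 = 1) :
    ∃ u, ∃ p : (commGraph G).Walk ⟨g, false⟩ u, p.IsPath ∧
      p.length + 1 = Fintype.card G +
        min #(univ.image fun g : G => g ^ 2) (#{h : G | h ^ 2 = 1} - 1) * #{h : G | h ^ 2 = 1} := by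
  obtain ⟨rot, hrot, hrotlen, hcentral⟩ := exists_enumeration_sq_eq_one_first hg
  set sq := (univ.image fun g : G => g ^ 2).toList.take (#{h : G | h ^ 2 = 1} - 1)
  have hsqlen : sq.length = min #(univ.image fun g : G => g ^ 2) (#{h : G | h ^ 2 = 1} - 1) := by
    simp [sq, min_comm]
  have hlen : sq.length ≤ rot.length := by
    have := card_le_card (filter_subset (· ^ 2 = 1) (univ : Finset G))
    rw [card_univ] at this
    omega
  have hsq : ∀ s ∈ sq, s ∈ Set.range fun g : G => g ^ 2 := fun s hs => by
    simpa using mem_toList.1 (List.mem_of_mem_take hs)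
  have hsqnd : sq.Nodup := (nodup_toList _).sublist (List.take_sublist _ _)
  clear_value sq
  have hnodup := nodup_cons_weave hsqnd hrot hlen
  have hchain := isChain_adj_of_nodup hnodup <| isChain_commute_cons_weave hg fun r hr =>
    hcentral r (List.take_subset_take_left _ (hsqlen ▸ min_le_right _ _) hr)
  obtain ⟨u, p, hp, hplen⟩ := SimpleGraph.exists_isPath_of_isChain hchain hnodup
  refine ⟨u, p, hp, ?_⟩
  have hL := length_cons_weave (g := g) hlen hsq
  rw [List.length_cons, hsqlen] at hL
  omega

end LowerBound

end GenDihedral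

open GenDihedral in
/-- Detour eccentricity of a central vertex `v ∈ Ω₁ = Z(D(G)) = {(g,1) : g² = e}` in the
commuting graph of a non-abelian `D(G)`: it equals `2n - 1` if `n/z < z`, and
`n + z(z-1) - 1` if `n/z ≥ z`, where `n = |G|` and `z = |{g : g² = e}|`. -/
theorem stmt10 {G : Type} [CommGroup G] [Fintype G] [DecidableEq G]
    (hna : ∃ g : G, g ^ 2 ≠ 1) (n z : ℕ) (hn : n = Fintype.card G)
    (hz : z = (Finset.univ.filter fun g : G => g ^ 2 = 1).card)
    (v : GenDihedral G) (hv : v.b = false ∧ v.g ^ 2 = 1) :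
    detourEcc (commGraph G) v =
      if n / z < z then 2 * n - 1 else n + z * (z - 1) - 1 := by
  obtain ⟨g, hg⟩ := hna
  obtain ⟨g₀, b⟩ := v
  obtain ⟨rfl, hg₀ : g₀ ^ 2 = 1⟩ := hv
  obtain ⟨u, p, hp, hlen⟩ := exists_isPath_length_add_one_eq hg₀
  have hv : (⟨g₀, false⟩ : GenDihedral G) ∈ centralRotations G :=
    mem_centralRotations.2 ⟨rfl, hg₀⟩
  rw [detourEcc_eq_of_forall_le (fun u q hq => Nat.le_sub_one_of_lt
    (length_add_one_le_of_isPath hg hq hv)) ⟨u, p, hp, by omega⟩]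
  have hcard : n = #(univ.image fun g : G => g ^ 2) * z := hn ▸ hz ▸ card_eq_card_image_sq_mul
  have hdiv : n / z = #(univ.image fun g : G => g ^ 2) := by
    rw [hcard, Nat.mul_div_cancel _ (hz ▸ card_pos.2 ⟨1, by simp⟩)]
  rw [← hn, ← hz, hdiv]
  split_ifs with hmz
  · rw [min_eq_left (by omega), ← hcard]
    omega
  · rw [min_eq_right (by omega), mul_comm]
end

section
/- Let G be a finite abelian group of order n, D(G) its generalized dihedral group (assumed non-abelian), \Gamma the commuting graph of D(G), and z = |{g \in G : g^2 = e}|. If z \ge 2, then the metric dimension of \Gamma equals 2n - n/z - 2. -/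
/-- `W` is a resolving set of `Γ` if every pair of distinct vertices is distinguished
by its vector of graph distances to the vertices of `W`. -/
def IsResolvingSet {V : Type} (Γ : SimpleGraph V) (W : Set V) : Prop :=
  ∀ u v : V, u ≠ v → ∃ w ∈ W, Γ.dist u w ≠ Γ.dist v w

/-- The metric dimension of `Γ`: the minimum cardinality of a resolving set. -/
noncomputable def metricDim {V : Type} (Γ : SimpleGraph V) : ℕ :=
  sInf {k : ℕ | ∃ W : Finset V, IsResolvingSet Γ ↑W ∧ W.card = k}

/-- The number `sᵢ` of resolving sets of `Γ` of cardinality `i` (the coefficient of `xⁱ`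
in the resolving polynomial `β(Γ, x) = Σᵢ sᵢ xⁱ`). -/
noncomputable def numResolvingSets {V : Type} (Γ : SimpleGraph V) (i : ℕ) : ℕ :=
  Set.ncard {W : Finset V | IsResolvingSet Γ ↑W ∧ W.card = i}

open Finset

namespace SimpleGraph

variable {V : Type} {Γ : SimpleGraph V} {c : V}

theorem dist_eq_ite_of_forall_adj [DecidableEq V] [DecidableRel Γ.Adj]
    (hc : ∀ v, v ≠ c → Γ.Adj c v) (u v : V) :
    Γ.dist u v = if u = v then 0 else if Γ.Adj u v then 1 else 2 := by
  split_ifs with huv hadj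
  · exact huv ▸ dist_self
  · exact dist_eq_one_iff_adj.mpr hadj
  · have hu : u ≠ c := by rintro rfl; exact hadj (hc v (Ne.symm huv))
    have hv : v ≠ c := by rintro rfl; exact hadj (hc u huv).symm
    let walk : Γ.Walk u v := .cons (hc u hu).symm (.cons (hc v hv) .nil)
    have hle : Γ.dist u v ≤ 2 := dist_le walk
    have h0 : Γ.dist u v ≠ 0 := fun h => huv ((Reachable.dist_eq_zero_iff ⟨walk⟩).mp h)
    have h1 : Γ.dist u v ≠ 1 := fun h => hadj (dist_eq_one_iff_adj.mp h)
    omega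

end SimpleGraph

section DominatingVertex

open SimpleGraph

variable {V : Type} {Γ : SimpleGraph V} {c : V}

theorem isResolvingSet_iff_of_forall_adj (hc : ∀ v, v ≠ c → Γ.Adj c v) {W : Set V} :
    IsResolvingSet Γ W ↔
      ∀ u v, u ∉ W → v ∉ W → u ≠ v → ∃ w ∈ W, ¬(Γ.Adj u w ↔ Γ.Adj v w) := by
  classical
  simp only [IsResolvingSet, dist_eq_ite_of_forall_adj hc]
  constructor
  · intro hW u v hu hv huv
    obtain ⟨w, hw, hd⟩ := hW u v huv
    refine ⟨w, hw, fun h => hd ?_⟩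
    simp only [(ne_of_mem_of_not_mem hw hu).symm, (ne_of_mem_of_not_mem hw hv).symm, h, if_false]
  · intro hW u v huv
    by_cases hu : u ∈ W
    · exact ⟨u, hu, by simp only [Ne.symm huv, if_true, if_false]; split_ifs <;> simp⟩
    by_cases hv : v ∈ W
    · exact ⟨v, hv, by simp only [huv, if_true, if_false]; split_ifs <;> simp⟩
    obtain ⟨w, hw, hd⟩ := hW u v hu hv huv
    refine ⟨w, hw, ?_⟩
    simp only [(ne_of_mem_of_not_mem hw hu).symm, (ne_of_mem_of_not_mem hw hv).symm, if_false]
    split_ifs <;> simp_all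

theorem IsResolvingSet.injOn_compl (hc : ∀ v, v ≠ c → Γ.Adj c v) {W : Set V}
    (hW : IsResolvingSet Γ W) {β : Type} {f : V → β}
    (hf : ∀ u v w, f u = f v → w ≠ u → w ≠ v → (Γ.Adj u w ↔ Γ.Adj v w)) :
    Set.InjOn f Wᶜ := by
  intro u hu v hv huv
  by_contra hne
  obtain ⟨w, hw, hd⟩ := (isResolvingSet_iff_of_forall_adj hc).mp hW u v hu hv hne
  exact hd (hf u v w huv (ne_of_mem_of_not_mem hw hu) (ne_of_mem_of_not_mem hw hv))

end DominatingVertex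

theorem metricDim_eq_of_isResolvingSet {V : Type} {Γ : SimpleGraph V} {W : Finset V}
    (hW : IsResolvingSet Γ ↑W)
    (hmin : ∀ W' : Finset V, IsResolvingSet Γ ↑W' → W.card ≤ W'.card) :
    metricDim Γ = W.card :=
  IsLeast.csInf_eq ⟨⟨W, hW, rfl⟩, by rintro _ ⟨W', hW', rfl⟩; exact hmin W' hW'⟩

namespace GenDihedral

theorem card_eq_two_mul {G : Type} [Fintype G] :
    Fintype.card (GenDihedral G) = 2 * Fintype.card G := by
  let e : G × Bool ≃ GenDihedral G :=
    ⟨fun p => ⟨p.1, p.2⟩, fun x => (x.g, x.b), fun _ => rfl, fun _ => rfl⟩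
  rw [← Fintype.card_congr e, Fintype.card_prod, Fintype.card_bool, mul_comm]

variable {G : Type} [CommGroup G]

@[simp]
theorem commGraph_adj_one {v : GenDihedral G} : (commGraph G).Adj 1 v ↔ v ≠ 1 :=
  ⟨fun h => h.1.symm, fun h => ⟨Ne.symm h, by rw [one_mul, mul_one]⟩⟩

section Adjacency

variable {g h : G}

@[simp]
theorem adj_rot_rot : (commGraph G).Adj ⟨g, false⟩ ⟨h, false⟩ ↔ g ≠ h := by
  simp [commGraph, mul_def, mul_comm]

@[simp]
theorem adj_rot_refl : (commGraph G).Adj ⟨g, false⟩ ⟨h, true⟩ ↔ g ^ 2 = 1 := by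
  simp [commGraph, mul_def, mul_comm g h, eq_inv_iff_mul_eq_one, sq]

@[simp]
theorem adj_refl_rot : (commGraph G).Adj ⟨g, true⟩ ⟨h, false⟩ ↔ h ^ 2 = 1 :=
  (commGraph G).adj_comm _ _ |>.trans adj_rot_refl

@[simp]
theorem adj_refl_refl : (commGraph G).Adj ⟨g, true⟩ ⟨h, true⟩ ↔ g ≠ h ∧ g ^ 2 = h ^ 2 := by
  simp [commGraph, mul_def, ← div_eq_mul_inv, div_eq_div_iff_mul_eq_mul, sq]

end Adjacency

section Counting

variable [Fintype G] [DecidableEq G]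

theorem card_filter_sq_eq (r : G) : #{g : G | g ^ 2 = r ^ 2} = #{g : G | g ^ 2 = 1} :=
  card_equiv (Equiv.mulLeft r⁻¹) fun g => by
    simp only [mem_filter, mem_univ, true_and, Equiv.coe_mulLeft]
    rw [mul_pow, inv_pow, inv_mul_eq_one, eq_comm]

theorem card_image_sq_mul_card_filter_sq_eq_one :
    #(univ.image fun g : G => g ^ 2) * #{g : G | g ^ 2 = 1} = Fintype.card G := by
  rw [← card_univ, card_eq_sum_card_image (fun g : G => g ^ 2) univ, sum_const_nat]
  simp only [mem_image, mem_univ, true_and, forall_exists_index]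
  rintro _ r rfl
  exact card_filter_sq_eq r

end Counting

section Twins

variable [DecidableEq G]

def twinLabel (x : GenDihedral G) : Bool ⊕ G :=
  if x.b then .inr (x.g ^ 2) else .inl (decide (x.g ^ 2 = 1))

theorem adj_iff_of_twinLabel_eq {u v w : GenDihedral G} (huv : twinLabel u = twinLabel v)
    (hwu : w ≠ u) (hwv : w ≠ v) : (commGraph G).Adj u w ↔ (commGraph G).Adj v w := by
  obtain ⟨ug, ub⟩ := u; obtain ⟨vg, vb⟩ := v; obtain ⟨wg, wb⟩ := w
  cases ub <;> cases vb <;> cases wb <;> simp_all [twinLabel, GenDihedral.ext_iff, eq_comm]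

variable [Fintype G]

theorem card_compl_le_of_isResolvingSet {W : Finset (GenDihedral G)}
    (hW : IsResolvingSet (commGraph G) ↑W) : #Wᶜ ≤ 2 + #(univ.image fun g : G => g ^ 2) := by
  have hinj : Set.InjOn twinLabel (↑W : Set (GenDihedral G))ᶜ :=
    hW.injOn_compl (c := 1) (fun v hv => commGraph_adj_one.mpr hv)
      fun _ _ _ huv hwu hwv => adj_iff_of_twinLabel_eq huv hwu hwv
  calc #Wᶜ ≤ #(univ.disjSum (univ.image fun g : G => g ^ 2)) :=
        card_le_card_of_injOn twinLabel (fun x _ => by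
          unfold twinLabel; split_ifs <;> simp [em]) (by rwa [coe_compl])
    _ = 2 + #(univ.image fun g : G => g ^ 2) := by
        rw [card_disjSum, card_univ, Fintype.card_bool]

end Twins

theorem mul_notMem_of_injOn_sq {S : Finset G} (hS : Set.InjOn (· ^ 2) (S : Set G)) {t : G}
    (ht1 : t ≠ 1) (ht : t ^ 2 = 1) {r : G} (hr : r ∈ S) : r * t ∉ S := fun hrt =>
  ht1 (mul_eq_left.mp (hS hrt hr (by simp [mul_pow, ht])))

section Transversal

variable [DecidableEq G]

def twinTransversal (g₀ : G) (S : Finset G) : Finset (GenDihedral G) :=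
  insert ⟨1, false⟩ (insert ⟨g₀, false⟩ (S.image fun r => ⟨r, true⟩))

variable {g₀ : G} {S : Finset G}

theorem mem_twinTransversal {x : GenDihedral G} :
    x ∈ twinTransversal g₀ S ↔ x = ⟨1, false⟩ ∨ x = ⟨g₀, false⟩ ∨ ∃ r ∈ S, x = ⟨r, true⟩ := by
  simp [twinTransversal, eq_comm]

theorem card_twinTransversal (hg₀ : g₀ ^ 2 ≠ 1) : #(twinTransversal g₀ S) = 2 + #S := by
  have h1 : (1 : G) ≠ g₀ := by rintro rfl; exact hg₀ (one_pow 2)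
  rw [twinTransversal, card_insert_of_notMem (by simp [h1]), card_insert_of_notMem (by simp),
    card_image_of_injective _ fun _ _ h => congrArg GenDihedral.g h]
  omega

variable [Fintype G]

theorem isResolvingSet_compl_twinTransversal (hg₀ : g₀ ^ 2 ≠ 1)
    (hS : Set.InjOn (· ^ 2) (S : Set G)) {t : G} (ht1 : t ≠ 1) (ht : t ^ 2 = 1) :
    IsResolvingSet (commGraph G) ↑(twinTransversal g₀ S)ᶜ := by
  rw [coe_compl, isResolvingSet_iff_of_forall_adj (c := 1) fun v hv => commGraph_adj_one.mpr hv]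
  simp only [Set.mem_compl_iff, mem_coe, not_not]
  obtain ⟨a, ha⟩ : ∃ a, a ∉ S := by
    by_cases h1 : (1 : G) ∈ S
    · exact ⟨1 * t, mul_notMem_of_injOn_sq hS ht1 ht h1⟩
    · exact ⟨1, h1⟩
  have hg₀t : (g₀ * t) ^ 2 ≠ 1 := by rwa [mul_pow, ht, mul_one]
  have hg₀t₁ : g₀ * t ≠ 1 := fun h => hg₀t (by rw [h, one_pow])
  have hg₀t₀ : g₀ * t ≠ g₀ := fun h => ht1 (mul_eq_left.mp h)
  have hreflNotMem : ⟨a, true⟩ ∉ twinTransversal g₀ S := by simp [mem_twinTransversal, ha]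
  have hrotNotMem : ⟨g₀ * t, false⟩ ∉ twinTransversal g₀ S := by
    simp [mem_twinTransversal, hg₀t₁, hg₀t₀]
  intro u v hu hv huv
  rw [mem_twinTransversal] at hu hv
  rcases hu with rfl | rfl | ⟨r, hr, rfl⟩ <;> rcases hv with rfl | rfl | ⟨s, hs, rfl⟩
  · exact absurd rfl huv
  · exact ⟨⟨a, true⟩, hreflNotMem, by simp [hg₀]⟩
  · exact ⟨⟨g₀ * t, false⟩, hrotNotMem, by simp [hg₀t₁.symm, hg₀t]⟩
  · exact ⟨⟨a, true⟩, hreflNotMem, by simp [hg₀]⟩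
  · exact absurd rfl huv
  · exact ⟨⟨g₀ * t, false⟩, hrotNotMem, by simp [hg₀t₀.symm, hg₀t]⟩
  · exact ⟨⟨g₀ * t, false⟩, hrotNotMem, by simp [hg₀t₁.symm, hg₀t]⟩
  · exact ⟨⟨g₀ * t, false⟩, hrotNotMem, by simp [hg₀t₀.symm, hg₀t]⟩
  · have hrs : r ^ 2 ≠ s ^ 2 := fun h => huv (by rw [hS hr hs h])
    have hrtNotMem : ⟨r * t, true⟩ ∉ twinTransversal g₀ S := by
      simp [mem_twinTransversal, mul_notMem_of_injOn_sq hS ht1 ht hr]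
    exact ⟨⟨r * t, true⟩, hrtNotMem, by simp [mul_pow, ht, hrs.symm, ht1]⟩

end Transversal

end GenDihedral

open GenDihedral in
/-- If `z = |{g : g² = e}| ≥ 2`, the metric dimension of the commuting graph of a
non-abelian `D(G)` equals `2n - n/z - 2`, where `n = |G|`. -/
theorem stmt14 {G : Type} [CommGroup G] [Fintype G] [DecidableEq G]
    (hna : ∃ g : G, g ^ 2 ≠ 1) (n z : ℕ) (hn : n = Fintype.card G)
    (hz : z = (Finset.univ.filter fun g : G => g ^ 2 = 1).card) (hz2 : 2 ≤ z) :
    metricDim (commGraph G) = 2 * n - n / z - 2 := by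
  obtain ⟨g₀, hg₀⟩ := hna
  obtain ⟨t, ht, ht1⟩ := exists_mem_ne (hz ▸ hz2 : 1 < #{g : G | g ^ 2 = 1}) 1
  set k := #(univ.image fun g : G => g ^ 2)
  have hnk : n / z = k := by
    rw [hn, hz, ← card_image_sq_mul_card_filter_sq_eq_one, Nat.mul_div_cancel _ (by omega)]
  obtain ⟨S, -, hSinj, hSimg⟩ := exists_subset_injOn_image_eq_of_surjOn
    (f := fun g : G => g ^ 2) Set.univ (univ.image fun g => g ^ 2) (by simp [Set.SurjOn])
  have hSk : #S = k := by rw [← card_image_of_injOn hSinj, hSimg]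
  have hcard : Fintype.card (GenDihedral G) = 2 * n := by rw [card_eq_two_mul, hn]
  rw [metricDim_eq_of_isResolvingSet
    (isResolvingSet_compl_twinTransversal hg₀ hSinj ht1 (mem_filter.mp ht).2) fun W hW => ?_]
  · rw [card_compl, card_twinTransversal hg₀, hcard]
    omega
  · have hWc := card_compl_le_of_isResolvingSet hW
    have hWW := card_compl_add_card W
    rw [card_compl, card_twinTransversal hg₀]
    omega
end
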